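/- arXiv:2508.13760 — 3 statements merged into one kernel-verified Lean document; each statement's English description precedes it below -/
import Mathlib

section
/- Every element r ∈ R_∞ has a unique decomposition into a product of pairwise disjoint quasi-cycles, nontrivial usual cycles, and a product of trivial quasi-cycles (idempotents with one-point-deleted domains); concretely, r = (∏_{a ∈ D(r)\I(r)} {}^a q) · (∏_i c_i) · d, where the supports of all factors are pairwise disjoint. -/
/-- Partial maps of `ℕ`, modeling elements of the symmetric inverse semigroup `R_∞`. -/
def PB := ℕ → Option ℕ

/-- Composition (semigroup multiplication) of partial maps: `(a * b)(x) = a(b(x))`. -/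
def PB.mul (a b : PB) : PB := fun x => (b x).bind a

/-- The identity partial bijection. -/
def PB.one : PB := fun x => some x

/-- `g` is a genuine element of `R_∞`: injective and the identity outside a finite set. -/
def PB.Valid (g : PB) : Prop :=
  (∀ x y z, g x = some z → g y = some z → x = y) ∧ {x | g x ≠ some x}.Finite

/-- The support of `r ∈ R_∞`: points of the domain moved by `r`, together with the
complement of the domain. -/
def PB.supp (g : PB) : Set ℕ := {x | g x ≠ some x}

/-- A trivial quasi-cycle `ε_{a}`: the identity partial bijection with domain `ℕ \ {a}`. -/
def IsTrivialQC (q : PB) : Prop := ∃ a, q a = none ∧ ∀ x, x ≠ a → q x = some x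

/-- A nontrivial quasi-cycle: on distinct points `v 0, …, v (n-1)` (`n ≥ 2`) it sends
`v i ↦ v (i+1)`, is undefined at the last point, and is the identity elsewhere. -/
def IsQC (q : PB) : Prop :=
  ∃ (n : ℕ) (v : ℕ → ℕ), 2 ≤ n ∧ Set.InjOn v (Set.Iio n) ∧
    (∀ i, i + 1 < n → q (v i) = some (v (i + 1))) ∧ q (v (n - 1)) = none ∧
    ∀ x, (∀ i < n, x ≠ v i) → q x = some x

/-- A nontrivial usual cycle on distinct points `v 0, …, v (n-1)` (`n ≥ 2`). -/
def IsCyc (c : PB) : Prop :=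
  ∃ (n : ℕ) (v : ℕ → ℕ), 2 ≤ n ∧ Set.InjOn v (Set.Iio n) ∧
    (∀ i, i + 1 < n → c (v i) = some (v (i + 1))) ∧ c (v (n - 1)) = some (v 0) ∧
    ∀ x, (∀ i < n, x ≠ v i) → c x = some x

/-!
The factors of any such decomposition are forced: each one is the restriction of `g` to one of
its orbits, i.e. an elementary map that agrees with `g` on its support and whose support is closed
under `g`-preimages (`PB.IsFactor`). Two factors that meet coincide, since a support closed under
`g` in both directions contains the whole orbit through any of its points. Conversely every moved
point lies on such an orbit: its cycle if it is periodic, and otherwise, by injectivity and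
finiteness of the support, the chain that runs from a point without preimage until it leaves
the domain. Hence the finitely many factors of `g`, listed in any order, form a decomposition,
and every decomposition is a permutation of this list.
-/

namespace PB

open Function Set

variable {g q : PB} {n : ℕ} {v : ℕ → ℕ} {a x y z : ℕ}

lemma apply_eq_self_of_notMem_supp (h : x ∉ g.supp) : g x = some x := not_not.mp h

def step (g : PB) : Option ℕ → Option ℕ := fun o => o.bind g

@[simp] lemma step_none : step g none = none := rfl

@[simp] lemma step_some : step g (some x) = g x := rfl

lemma iterate_step_none (k : ℕ) : (step g)^[k] none = none := iterate_fixed rfl k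

lemma iterate_step_ne_none_of_le {o : Option ℕ} {k m : ℕ} (h : (step g)^[m] o ≠ none)
    (hkm : k ≤ m) : (step g)^[k] o ≠ none := by
  intro hk
  obtain ⟨d, rfl⟩ := Nat.exists_eq_add_of_le' hkm
  rw [iterate_add_apply, hk, iterate_step_none] at h
  exact h rfl

lemma iterate_step_of_notMem_supp (h : x ∉ g.supp) (k : ℕ) :
    (step g)^[k] (some x) = some x :=
  iterate_fixed (apply_eq_self_of_notMem_supp h) k

lemma Valid.apply_mem_supp (hg : g.Valid) (hx : x ∈ g.supp) (h : g x = some y) :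
    y ∈ g.supp := by
  intro hy
  obtain rfl := hg.1 x y y h hy
  exact hx h

lemma Valid.iterate_step_mem_supp (hg : g.Valid) (hx : x ∈ g.supp) {k : ℕ}
    (h : (step g)^[k] (some x) = some y) : y ∈ g.supp := by
  induction k generalizing y with
  | zero => rwa [← Option.some.inj h]
  | succ k ih =>
    rw [iterate_succ_apply'] at h
    obtain ⟨w, hw, hwy⟩ := Option.bind_eq_some_iff.mp h
    exact hg.apply_mem_supp (ih hw) hwy

lemma Valid.step_inj (hg : g.Valid) {o o' : Option ℕ} (h : step g o = step g o')
    (hne : step g o ≠ none) : o = o' := by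
  cases o with
  | none => exact absurd rfl hne
  | some x =>
    cases o' with
    | none => exact absurd h hne
    | some x' =>
      obtain ⟨z, hz⟩ := Option.ne_none_iff_exists'.mp hne
      exact congrArg some (hg.1 x x' z hz (h.symm.trans hz))

lemma Valid.iterate_step_inj (hg : g.Valid) {o o' : Option ℕ} :
    ∀ {k : ℕ}, (step g)^[k] o = (step g)^[k] o' → (step g)^[k] o ≠ none → o = o'
  | 0, h, _ => h
  | k + 1, h, hne => by
    rw [iterate_succ_apply] at h hne
    have hne' : step g o ≠ none := fun h0 => hne (by rw [h0, iterate_step_none])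
    exact hg.step_inj (hg.iterate_step_inj h hne) hne'

lemma Valid.isPeriodicPt_of_iterate_step_eq (hg : g.Valid) {o : Option ℕ} {i j : ℕ}
    (hij : i ≤ j) (h : (step g)^[i] o = (step g)^[j] o) (hne : (step g)^[i] o ≠ none) :
    IsPeriodicPt (step g) (j - i) o := by
  rw [show j = i + (j - i) by omega, iterate_add_apply] at h
  exact hg.iterate_step_inj h.symm (h ▸ hne)

lemma some_notMem_periodicPts (h : ∀ z, g z ≠ some a) : some a ∉ periodicPts (step g) := by
  rintro ⟨_ | k, hk, hper⟩
  · omega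
  rw [IsPeriodicPt, IsFixedPt, iterate_succ_apply'] at hper
  cases hw : (step g)^[k] (some a) with
  | none => simp [hw] at hper
  | some w => exact h w (by rwa [hw] at hper)

lemma Valid.exists_iterate_step_eq_none (hg : g.Valid) (ha : a ∈ g.supp)
    (hper : some a ∉ periodicPts (step g)) : ∃ k, (step g)^[k] (some a) = none := by
  by_contra! hdef
  choose u hu using fun k => Option.ne_none_iff_exists'.mp (hdef k)
  obtain ⟨i, j, hij, huij⟩ :=
    hg.2.exists_lt_map_eq_of_forall_mem (fun k => hg.iterate_step_mem_supp ha (hu k))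
  have := hg.isPeriodicPt_of_iterate_step_eq hij.le (by rw [hu, hu, huij]) (hdef i)
  exact hper (mk_mem_periodicPts (by omega) this)

/-- If every point had a preimage, the backward orbit of `x` would be an infinite sequence in the
finite support, so two of its points would coincide and `x` would be periodic. -/
lemma Valid.exists_chain_start (hg : g.Valid) (hx : x ∈ g.supp)
    (hper : some x ∉ periodicPts (step g)) :
    ∃ a m, (step g)^[m] (some a) = some x ∧ ∀ z, g z ≠ some a := by
  by_contra! hpre
  have hback : ∀ k, ∃ y, (step g)^[k] (some y) = some x := by
    intro k
    induction k with
    | zero => exact ⟨x, rfl⟩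
    | succ k ih =>
      obtain ⟨y, hy⟩ := ih
      obtain ⟨z, hz⟩ := hpre y k hy
      exact ⟨z, by rw [iterate_succ_apply, step_some, hz, hy]⟩
  choose y hy using hback
  have hmem : ∀ k, y k ∈ g.supp := by
    intro k
    by_contra hk
    have hyx := hy k
    rw [iterate_step_of_notMem_supp hk, Option.some_inj] at hyx
    exact hk (hyx ▸ hx)
  obtain ⟨i, j, hij, hyij⟩ := hg.2.exists_lt_map_eq_of_forall_mem hmem
  have : (step g)^[j - i] (some x) = some x :=
    calc (step g)^[j - i] (some x) = (step g)^[j - i] ((step g)^[i] (some (y j))) := by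
          rw [← hyij, hy]
      _ = (step g)^[j] (some (y j)) := by rw [← iterate_add_apply, Nat.sub_add_cancel hij.le]
      _ = some x := hy j
  exact hper (mk_mem_periodicPts (by omega) this)

structure IsOrbit (g : PB) (n : ℕ) (v : ℕ → ℕ) : Prop where
  pos : 0 < n
  injOn : InjOn v (Iio n)
  apply_succ : ∀ i, i + 1 < n → g (v i) = some (v (i + 1))
  apply_last : g (v (n - 1)) = none ∨ 2 ≤ n ∧ g (v (n - 1)) = some (v 0)

namespace IsOrbit

lemma apply_eq_of_lt (ho : IsOrbit g n v) {i : ℕ} (hi : i < n) :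
    i + 1 < n ∧ g (v i) = some (v (i + 1)) ∨ i = n - 1 := by
  rcases Nat.lt_or_ge (i + 1) n with h | h
  · exact Or.inl ⟨h, ho.apply_succ i h⟩
  · exact Or.inr (by omega)

lemma apply_mem (ho : IsOrbit g n v) (hx : x ∈ v '' Iio n) (h : g x = some y) :
    y ∈ v '' Iio n := by
  obtain ⟨i, hi, rfl⟩ := hx
  rcases ho.apply_eq_of_lt hi with ⟨hi', hs⟩ | rfl
  · exact ⟨i + 1, hi', Option.some.inj (hs.symm.trans h)⟩
  · rcases ho.apply_last with hl | ⟨-, hl⟩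
    · simp [hl] at h
    · exact ⟨0, ho.pos, Option.some.inj (hl.symm.trans h)⟩

lemma apply_ne (ho : IsOrbit g n v) (hx : x ∈ v '' Iio n) : g x ≠ some x := by
  obtain ⟨i, hi, rfl⟩ := hx
  intro h
  have hi : i < n := hi
  rcases ho.apply_eq_of_lt hi with ⟨hi', hs⟩ | rfl
  · have := ho.injOn hi' hi (Option.some.inj (hs.symm.trans h))
    omega
  · rcases ho.apply_last with hl | ⟨h2, hl⟩
    · simp [hl] at h
    · have := ho.injOn (show 0 < n from ho.pos) hi (Option.some.inj (hl.symm.trans h))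
      omega

lemma supp_eq (ho : IsOrbit g n v) (hfix : ∀ x ∉ v '' Iio n, g x = some x) :
    g.supp = v '' Iio n :=
  Subset.antisymm (fun x hx => by_contra fun h => hx (hfix x h)) fun _ hx => ho.apply_ne hx

lemma congr (ho : IsOrbit g n v) (h : ∀ x ∈ v '' Iio n, q x = g x) : IsOrbit q n v where
  pos := ho.pos
  injOn := ho.injOn
  apply_succ i hi := (h _ (mem_image_of_mem v (mem_Iio.2 (by omega)))).trans (ho.apply_succ i hi)
  apply_last := by
    rw [h _ (mem_image_of_mem v (mem_Iio.2 (Nat.sub_lt ho.pos one_pos)))]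
    exact ho.apply_last

lemma image_subset (ho : IsOrbit g n v) {S : Set ℕ}
    (hS : ∀ z y, g z = some y → (z ∈ S ↔ y ∈ S)) (hmeet : (v '' Iio n ∩ S).Nonempty) :
    v '' Iio n ⊆ S := by
  have h0 : ∀ i < n, v i ∈ S ↔ v 0 ∈ S := by
    intro i hi
    induction i with
    | zero => rfl
    | succ i ih => rw [← ih (by omega), hS _ _ (ho.apply_succ i hi)]
  obtain ⟨_, ⟨j, hj, rfl⟩, hjS⟩ := hmeet
  rintro _ ⟨i, hi, rfl⟩
  exact (h0 i hi).2 ((h0 j hj).1 hjS)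

lemma preimage_mem (hg : g.Valid) (ho : IsOrbit g n v)
    (h0 : ∀ z, g z = some (v 0) → z ∈ v '' Iio n) (hz : g z = some y) (hy : y ∈ v '' Iio n) :
    z ∈ v '' Iio n := by
  obtain ⟨i, hi, rfl⟩ := hy
  rcases i with _ | i
  · exact h0 z hz
  · rw [hg.1 z (v i) _ hz (ho.apply_succ i hi)]
    exact mem_image_of_mem v (mem_Iio.2 (Nat.lt_of_succ_lt hi))

end IsOrbit

lemma Valid.exists_isOrbit_iterate (hg : g.Valid) (hn : 0 < n)
    (hdef : (step g)^[n - 1] (some a) ≠ none)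
    (hret : ∀ k, 0 < k → k < n → ¬IsPeriodicPt (step g) k (some a))
    (hlast : (step g)^[n] (some a) = none ∨ 2 ≤ n ∧ (step g)^[n] (some a) = some a) :
    ∃ v, IsOrbit g n v ∧ (∀ i < n, (step g)^[i] (some a) = some (v i)) ∧
      g (v (n - 1)) = (step g)^[n] (some a) := by
  set v : ℕ → ℕ := fun i => ((step g)^[i] (some a)).getD a
  have hv : ∀ i < n, (step g)^[i] (some a) = some (v i) := fun i hi =>
    (Option.getD_of_ne_none (iterate_step_ne_none_of_le hdef (by omega)) a).symm
  have hv0 : v 0 = a := (Option.some.inj (hv 0 hn)).symm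
  have hsucc : ∀ i < n, g (v i) = (step g)^[i + 1] (some a) := fun i hi => by
    rw [iterate_succ_apply', hv i hi, step_some]
  have hlast' : g (v (n - 1)) = (step g)^[n] (some a) := by
    rw [hsucc _ (by omega), Nat.sub_add_cancel hn]
  refine ⟨v, ⟨hn, ?_, fun i hi => ?_, ?_⟩, hv, hlast'⟩
  · intro i hi j hj hij
    wlog hlt : i < j generalizing i j
    · rcases (not_lt.mp hlt).eq_or_lt with h | h
      · exact h.symm
      · exact (this hj hi hij.symm h).symm
    have hper := hg.isPeriodicPt_of_iterate_step_eq hlt.le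
      (by rw [hv i hi, hv j hj, hij]) (by rw [hv i hi]; exact Option.some_ne_none _)
    exact absurd hper (hret (j - i) (by omega) (lt_of_le_of_lt (Nat.sub_le j i) hj))
  · rw [hsucc i (by omega), hv (i + 1) hi]
  · rwa [hlast', hv0]

lemma Valid.exists_isOrbit (hg : g.Valid) (hx : x ∈ g.supp) :
    ∃ n v, IsOrbit g n v ∧ x ∈ v '' Iio n ∧ ∀ z, g z = some (v 0) → z ∈ v '' Iio n := by
  by_cases hper : some x ∈ periodicPts (step g)
  · set n := minimalPeriod (step g) (some x)
    have hn : 0 < n := minimalPeriod_pos_of_mem_periodicPts hper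
    have hxn : (step g)^[n] (some x) = some x := isPeriodicPt_minimalPeriod _ _
    have hn2 : 2 ≤ n := by
      by_contra! h
      have h1 : n = 1 := by omega
      rw [h1] at hxn
      exact hx hxn
    obtain ⟨v, ho, hv, hlast⟩ := hg.exists_isOrbit_iterate hn
      (iterate_step_ne_none_of_le (by rw [hxn]; exact Option.some_ne_none _) (by omega))
      (fun k hk hkn => not_isPeriodicPt_of_pos_of_lt_minimalPeriod hk.ne' hkn)
      (Or.inr ⟨hn2, hxn⟩)
    have hv0 : v 0 = x := (Option.some.inj (hv 0 hn)).symm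
    refine ⟨n, v, ho, ⟨0, hn, hv0⟩, fun z hz => ?_⟩
    rw [hg.1 z (v (n - 1)) _ hz (by rw [hlast, hxn, hv0])]
    exact mem_image_of_mem v (show n - 1 < n by omega)
  · obtain ⟨a, m, hm, hnopre⟩ := hg.exists_chain_start hx hper
    have ha : a ∈ g.supp := hnopre a
    have hnper := some_notMem_periodicPts hnopre
    have hend : ∃ k, (step g)^[k] (some a) = none := hg.exists_iterate_step_eq_none ha hnper
    obtain ⟨n, hnone, hmin⟩ : ∃ n, (step g)^[n] (some a) = none ∧
        ∀ k < n, (step g)^[k] (some a) ≠ none :=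
      ⟨Nat.find hend, Nat.find_spec hend, fun k hk => Nat.find_min hend hk⟩
    have hn : 0 < n := Nat.pos_of_ne_zero fun h0 => by simp [h0] at hnone
    obtain ⟨v, ho, hv, -⟩ := hg.exists_isOrbit_iterate hn (hmin _ (by omega))
      (fun k hk _ hper => hnper (mk_mem_periodicPts hk hper)) (Or.inl hnone)
    have hmn : m < n := by
      by_contra! h
      exact iterate_step_ne_none_of_le (by rw [hm]; exact Option.some_ne_none _) h hnone
    have hv0 : v 0 = a := (Option.some.inj (hv 0 hn)).symm
    refine ⟨n, v, ho, ⟨m, hmn, Option.some.inj ((hv m hmn).symm.trans hm)⟩, fun z hz => ?_⟩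
    exact absurd hz (hv0 ▸ hnopre z)

def IsElementary (q : PB) : Prop := IsTrivialQC q ∨ IsQC q ∨ IsCyc q

lemma isElementary_iff :
    IsElementary q ↔ ∃ n v, IsOrbit q n v ∧ ∀ x ∉ v '' Iio n, q x = some x := by
  have hout : ∀ {n : ℕ} {v : ℕ → ℕ} {x : ℕ}, x ∉ v '' Iio n ↔ ∀ i < n, x ≠ v i := by
    simp [eq_comm]
  constructor
  · rintro (⟨a, ha, hfix⟩ | ⟨n, v, hn, hinj, hsucc, hlast, hfix⟩ |
      ⟨n, v, hn, hinj, hsucc, hlast, hfix⟩)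
    · refine ⟨1, fun _ => a, ⟨one_pos, fun i hi j hj _ => ?_, fun i hi => ?_, Or.inl ha⟩,
        fun x hx => hfix x ?_⟩
      · simp only [mem_Iio] at hi hj
        omega
      · omega
      · exact fun h => hx ⟨0, mem_Iio.2 one_pos, h.symm⟩
    · exact ⟨n, v, ⟨by omega, hinj, hsucc, Or.inl hlast⟩, fun x hx => hfix x (hout.1 hx)⟩
    · exact ⟨n, v, ⟨by omega, hinj, hsucc, Or.inr ⟨hn, hlast⟩⟩, fun x hx => hfix x (hout.1 hx)⟩
  · rintro ⟨n, v, ⟨hn, hinj, hsucc, hlast⟩, hfix⟩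
    rcases hlast with hlast | ⟨hn2, hlast⟩
    · rcases (Nat.succ_le_of_lt hn).eq_or_lt with h1 | hn2
      · subst h1
        refine Or.inl ⟨v 0, hlast, fun x hx => hfix x (hout.2 fun i hi => ?_)⟩
        obtain rfl : i = 0 := by omega
        exact hx
      · exact Or.inr (Or.inl ⟨n, v, hn2, hinj, hsucc, hlast, fun x hx => hfix x (hout.2 hx)⟩)
    · exact Or.inr (Or.inr ⟨n, v, hn2, hinj, hsucc, hlast, fun x hx => hfix x (hout.2 hx)⟩)

namespace IsElementary

lemma exists_isOrbit_supp_eq (hq : IsElementary q) :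
    ∃ n v, IsOrbit q n v ∧ q.supp = v '' Iio n := by
  obtain ⟨n, v, ho, hfix⟩ := isElementary_iff.1 hq
  exact ⟨n, v, ho, ho.supp_eq hfix⟩

lemma supp_nonempty (hq : IsElementary q) : q.supp.Nonempty := by
  obtain ⟨n, v, ho, hsupp⟩ := hq.exists_isOrbit_supp_eq
  exact hsupp ▸ ⟨v 0, 0, ho.pos, rfl⟩

lemma apply_mem_supp (hq : IsElementary q) (hx : x ∈ q.supp) (h : q x = some y) :
    y ∈ q.supp := by
  obtain ⟨n, v, ho, hsupp⟩ := hq.exists_isOrbit_supp_eq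
  rw [hsupp] at hx ⊢
  exact ho.apply_mem hx h

end IsElementary

/-- `q` is the restriction of `g` to one of its orbits. -/
def IsFactor (g q : PB) : Prop :=
  IsElementary q ∧ (∀ x ∈ q.supp, q x = g x) ∧ ∀ z y, g z = some y → y ∈ q.supp → z ∈ q.supp

namespace IsFactor

variable {p : PB}

lemma supp_subset (hq : IsFactor g q) : q.supp ⊆ g.supp := fun x hx h =>
  hx ((hq.2.1 x hx).trans h)

lemma mem_supp_iff (hq : IsFactor g q) (h : g z = some y) : z ∈ q.supp ↔ y ∈ q.supp :=
  ⟨fun hz => hq.1.apply_mem_supp hz ((hq.2.1 z hz).trans h), hq.2.2 z y h⟩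

lemma supp_subset_of_mem (hp : IsFactor g p) (hq : IsFactor g q) (hxp : x ∈ p.supp)
    (hxq : x ∈ q.supp) : q.supp ⊆ p.supp := by
  obtain ⟨n, v, ho, hsupp⟩ := hq.1.exists_isOrbit_supp_eq
  rw [hsupp] at hxq ⊢
  exact (ho.congr fun y hy => (hq.2.1 y (hsupp ▸ hy)).symm).image_subset
    (fun _ _ => hp.mem_supp_iff) ⟨x, hxq, hxp⟩

lemma eq_of_mem (hp : IsFactor g p) (hq : IsFactor g q) (hxp : x ∈ p.supp)
    (hxq : x ∈ q.supp) : p = q := by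
  have hpq : p.supp = q.supp :=
    (hq.supp_subset_of_mem hp hxq hxp).antisymm (hp.supp_subset_of_mem hq hxp hxq)
  funext z
  by_cases hz : z ∈ p.supp
  · rw [hp.2.1 z hz, hq.2.1 z (hpq ▸ hz)]
  · rw [apply_eq_self_of_notMem_supp hz,
      apply_eq_self_of_notMem_supp (show z ∉ q.supp from hpq ▸ hz)]

end IsFactor

lemma Valid.exists_isFactor (hg : g.Valid) (hx : x ∈ g.supp) :
    ∃ q, IsFactor g q ∧ x ∈ q.supp := by
  classical
  obtain ⟨n, v, ho, hxO, h0⟩ := hg.exists_isOrbit hx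
  set O := v '' Iio n
  set q : PB := fun z => if z ∈ O then g z else some z
  have hqO : ∀ z ∈ O, q z = g z := fun z hz => if_pos hz
  have hsupp : q.supp = O :=
    (ho.congr hqO).supp_eq fun z hz => if_neg hz
  refine ⟨q, ⟨isElementary_iff.2 ⟨n, v, ho.congr hqO, fun z hz => if_neg hz⟩, ?_, ?_⟩, hsupp ▸ hxO⟩
  · exact fun z hz => hqO z (hsupp ▸ hz)
  · rw [hsupp]
    exact fun z y hz hy => ho.preimage_mem hg h0 hz hy

lemma Valid.finite_isFactor (hg : g.Valid) : {q | IsFactor g q}.Finite := by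
  refine Finite.of_finite_image (f := PB.supp) (hg.2.finite_subsets.subset ?_) ?_
  · rintro _ ⟨q, hq, rfl⟩
    exact hq.supp_subset
  · intro p hp q hq hpq
    obtain ⟨x, hx⟩ := hp.1.supp_nonempty
    exact hp.eq_of_mem hq hx (hpq ▸ hx)

def IsDecomposition (g : PB) (L : List PB) : Prop :=
  (∀ q ∈ L, IsElementary q) ∧ L.Pairwise (fun p q => Disjoint (PB.supp p) (PB.supp q)) ∧
    L.foldr PB.mul PB.one = g

lemma foldr_mul_apply_of_forall_notMem {L : List PB} (h : ∀ q ∈ L, x ∉ q.supp) :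
    L.foldr PB.mul PB.one x = some x := by
  induction L with
  | nil => rfl
  | cons p L ih =>
    show (L.foldr PB.mul PB.one x).bind p = some x
    rw [ih fun q hq => h q (List.mem_cons_of_mem p hq)]
    exact apply_eq_self_of_notMem_supp (h p List.mem_cons_self)

lemma foldr_mul_apply_of_mem {L : List PB} (hL : ∀ q ∈ L, IsElementary q)
    (hpw : L.Pairwise (fun p q => Disjoint (PB.supp p) (PB.supp q))) (hq : q ∈ L)
    (hx : x ∈ q.supp) : L.foldr PB.mul PB.one x = q x := by
  induction L with
  | nil => simp at hq
  | cons p L ih =>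
    rw [List.pairwise_cons] at hpw
    show (L.foldr PB.mul PB.one x).bind p = q x
    rcases List.mem_cons.1 hq with rfl | hqL
    · rw [foldr_mul_apply_of_forall_notMem fun r hr hxr =>
        disjoint_left.1 (hpw.1 r hr) hx hxr]
      rfl
    · rw [ih (fun r hr => hL r (List.mem_cons_of_mem p hr)) hpw.2 hqL]
      cases hqx : q x with
      | none => rfl
      | some y =>
        have hy : y ∉ p.supp := fun hyp =>
          disjoint_left.1 (hpw.1 q hqL) hyp ((hL q hq).apply_mem_supp hx hqx)
        exact apply_eq_self_of_notMem_supp hy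

namespace IsDecomposition

variable {L : List PB}

lemma exists_mem_supp (hL : IsDecomposition g L) (hx : x ∈ g.supp) : ∃ p ∈ L, x ∈ p.supp := by
  by_contra! h
  exact hx (hL.2.2 ▸ foldr_mul_apply_of_forall_notMem h)

lemma isFactor_of_mem (hL : IsDecomposition g L) (hq : q ∈ L) : IsFactor g q := by
  obtain ⟨hel, hpw, hprod⟩ := hL
  have hagree : ∀ p ∈ L, ∀ x ∈ p.supp, p x = g x := fun p hp x hx =>
    hprod ▸ (foldr_mul_apply_of_mem hel hpw hp hx).symm
  refine ⟨hel q hq, hagree q hq, fun z y hzy hy => ?_⟩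
  by_cases hz : z ∈ g.supp
  · obtain ⟨p, hp, hzp⟩ := exists_mem_supp ⟨hel, hpw, hprod⟩ hz
    have hyp : y ∈ p.supp := (hel p hp).apply_mem_supp hzp ((hagree p hp z hzp).trans hzy)
    obtain rfl : p = q := by
      by_contra hne
      have : Std.Symm fun p q : PB => Disjoint p.supp q.supp := ⟨fun _ _ h => h.symm⟩
      exact disjoint_left.1 (hpw.forall hp hq hne) hyp hy
    exact hzp
  · rw [apply_eq_self_of_notMem_supp hz, Option.some_inj] at hzy
    exact hzy ▸ hy

lemma mem_iff (hL : IsDecomposition g L) : q ∈ L ↔ IsFactor g q := by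
  refine ⟨hL.isFactor_of_mem, fun hq => ?_⟩
  obtain ⟨x, hx⟩ := hq.1.supp_nonempty
  obtain ⟨p, hp, hxp⟩ := hL.exists_mem_supp (hq.supp_subset hx)
  rwa [← (hL.isFactor_of_mem hp).eq_of_mem hq hxp hx]

lemma nodup (hL : IsDecomposition g L) : L.Nodup :=
  hL.2.1.imp_of_mem fun hp _ hd hpq => by
    subst hpq
    obtain ⟨x, hx⟩ := (hL.1 _ hp).supp_nonempty
    exact disjoint_left.1 hd hx hx

end IsDecomposition

lemma Valid.isDecomposition_toList (hg : g.Valid) :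
    IsDecomposition g hg.finite_isFactor.toFinset.toList := by
  set L := hg.finite_isFactor.toFinset.toList
  have hmem : ∀ q, q ∈ L ↔ IsFactor g q := by simp [L]
  have hel : ∀ q ∈ L, IsElementary q := fun q hq => ((hmem q).1 hq).1
  have hpw : L.Pairwise (fun p q => Disjoint (PB.supp p) (PB.supp q)) :=
    (Finset.nodup_toList _).pairwise_of_forall_ne fun p hp q hq hne =>
      disjoint_left.2 fun x hxp hxq => hne (((hmem p).1 hp).eq_of_mem ((hmem q).1 hq) hxp hxq)
  refine ⟨hel, hpw, funext fun x => ?_⟩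
  by_cases hx : x ∈ g.supp
  · obtain ⟨q, hq, hxq⟩ := hg.exists_isFactor hx
    rw [foldr_mul_apply_of_mem hel hpw ((hmem q).2 hq) hxq, hq.2.1 x hxq]
  · rw [foldr_mul_apply_of_forall_notMem fun q hq hxq => hx (((hmem q).1 hq).supp_subset hxq),
      apply_eq_self_of_notMem_supp hx]

end PB

/-- Every `r ∈ R_∞` has a decomposition, unique up to reordering,
into a product of factors with pairwise disjoint supports, each factor being a
trivial quasi-cycle, a nontrivial quasi-cycle, or a nontrivial usual cycle. -/
theorem stmt3 (g : PB) (hg : g.Valid) :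
    ∃ L : List PB,
      (∀ q ∈ L, IsTrivialQC q ∨ IsQC q ∨ IsCyc q) ∧
      L.Pairwise (fun p q => Disjoint (PB.supp p) (PB.supp q)) ∧
      L.foldr PB.mul PB.one = g ∧
      ∀ L' : List PB,
        ((∀ q ∈ L', IsTrivialQC q ∨ IsQC q ∨ IsCyc q) ∧
          L'.Pairwise (fun p q => Disjoint (PB.supp p) (PB.supp q)) ∧
          L'.foldr PB.mul PB.one = g) → L'.Perm L := by
  have hL := hg.isDecomposition_toList
  refine ⟨_, hL.1, hL.2.1, hL.2.2, fun L' hL' => ?_⟩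
  rw [List.perm_ext_iff_of_nodup (PB.IsDecomposition.nodup hL') hL.nodup]
  intro q
  rw [PB.IsDecomposition.mem_iff hL', hL.mem_iff]
end

section
/- In the group algebra ℂ[R_n] of the finite symmetric inverse semigroup R_n, let p_n = Σ_{s ∈ S_n} s. Then the algebra p_n ℂ[R_n] p_n is commutative. -/
/-- The finite symmetric inverse semigroup `R_n` (partial bijections of `{1,…,n}`),
with composition as multiplication, is a monoid. -/
instance Rn.monoid (n : ℕ) : Monoid (PEquiv (Fin n) (Fin n)) where
  mul a b := a.trans b
  one := PEquiv.refl (Fin n)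
  mul_assoc a b c := PEquiv.trans_assoc a b c
  one_mul a := PEquiv.refl_trans a
  mul_one a := PEquiv.trans_refl a

/-- The element `p_n = Σ_{s ∈ S_n} s` of the semigroup algebra `ℂ[R_n]`. -/
noncomputable def pn (n : ℕ) : MonoidAlgebra ℂ (PEquiv (Fin n) (Fin n)) :=
  ∑ s : Equiv.Perm (Fin n), MonoidAlgebra.single s.toPEquiv (1 : ℂ)

/-!
Inversion `a ↦ a.symm` of partial bijections is an anti-automorphism of `R_n`, hence induces an
anti-automorphism `τ` of `ℂ[R_n]`. Every partial bijection `a` extends to a permutation `σ`, and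
then `a.symm = σ⁻¹ a σ⁻¹` lies in the `S_n`-double coset of `a`. Since `p_n` absorbs permutations
on both sides, `τ` fixes every element of the corner `p_n ℂ[R_n] p_n`. The corner is closed under
multiplication, so for `z, w` in it `z w = τ (z w) = τ w τ z = w z` (Gelfand's trick).
-/

open MulOpposite

theorem commute_corner_of_unop_map_eq {A F : Type*} [Semigroup A] [FunLike F A Aᵐᵒᵖ]
    [MulHomClass F A Aᵐᵒᵖ] (τ : F) {p : A} (hτ : ∀ x, (τ (p * x * p)).unop = p * x * p)
    (x y : A) : Commute (p * x * p) (p * y * p) :=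
  calc p * x * p * (p * y * p) = (τ (p * (x * p * p * y) * p)).unop := by
        rw [hτ]; simp only [mul_assoc]
    _ = (τ (p * x * p * (p * y * p))).unop := by simp only [mul_assoc]
    _ = p * y * p * (p * x * p) := by rw [map_mul, unop_mul, hτ, hτ]

namespace MonoidAlgebra

variable {R M : Type*} [CommSemiring R] [Monoid M]

noncomputable def mapDomainAntiHom (e : M →* Mᵐᵒᵖ) : R[M] →+* R[M]ᵐᵒᵖ :=
  (MonoidAlgebra.opRingEquiv (R := R) (M := M)).symm.toRingHom.comp
    ((mapRingHom Mᵐᵒᵖ (RingEquiv.toOpposite R : R →+* Rᵐᵒᵖ)).comp (mapDomainRingHom R e))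

@[simp]
theorem mapDomainAntiHom_single (e : M →* Mᵐᵒᵖ) (m : M) (r : R) :
    mapDomainAntiHom e (single m r) = op (single (e m).unop r) := by
  simp [mapDomainAntiHom]

end MonoidAlgebra

namespace PEquiv

variable {α β : Type*}

theorem exists_le_toPEquiv [Finite α] (f : α ≃. α) : ∃ σ : Equiv.Perm α, f ≤ σ.toPEquiv := by
  obtain ⟨σ, hσ⟩ := Equiv.Perm.exists_extending_pair (fun x : {x // (f x).isSome} => (x : α))
    (fun x => (f x).get x.2) Subtype.val_injective fun x y h => Subtype.ext <|
      f.inj (Option.get_mem x.2) (by simp only at h; rw [h]; exact Option.get_mem y.2)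
  refine ⟨σ, le_def.2 fun a b hb => ?_⟩
  have ha : (f a).isSome := Option.isSome_of_mem hb
  simp [hσ ⟨a, ha⟩, Option.get_of_mem ha hb]

theorem symm_eq_of_le_toPEquiv {f : α ≃. β} {σ : α ≃ β} (h : f ≤ σ.toPEquiv) :
    f.symm = σ.symm.toPEquiv.trans (f.trans σ.symm.toPEquiv) := by
  have hσ : ∀ {a b}, f a = some b → σ a = b := fun hab => by simpa using le_def.1 h _ _ hab
  ext y x
  simp only [eq_some_iff, trans_eq_some, Equiv.toPEquiv_apply, Option.some.injEq,
    exists_eq_left']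
  constructor
  · intro hx
    obtain rfl := hσ hx
    exact ⟨σ x, by simpa using hx, σ.symm_apply_apply x⟩
  · rintro ⟨z, hz, rfl⟩
    obtain rfl := hσ hz
    simpa using hz

end PEquiv

namespace Rn

open MonoidAlgebra

variable {n : ℕ}

theorem mul_def (a b : PEquiv (Fin n) (Fin n)) : a * b = a.trans b := rfl

theorem toPEquiv_mul_toPEquiv (s t : Equiv.Perm (Fin n)) :
    s.toPEquiv * t.toPEquiv = (t * s).toPEquiv :=
  (Equiv.toPEquiv_trans s t).symm

variable (n) in
def symmAntiHom : PEquiv (Fin n) (Fin n) →* (PEquiv (Fin n) (Fin n))ᵐᵒᵖ where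
  toFun a := op a.symm
  map_one' := congrArg op PEquiv.symm_refl
  map_mul' a b := congrArg op (PEquiv.symm_trans_rev a b)

@[simp]
theorem unop_symmAntiHom (a : PEquiv (Fin n) (Fin n)) : (symmAntiHom n a).unop = a.symm := rfl

theorem single_toPEquiv_mul_pn (s : Equiv.Perm (Fin n)) :
    single s.toPEquiv (1 : ℂ) * pn n = pn n := by
  rw [pn, Finset.mul_sum]
  exact Fintype.sum_equiv (Equiv.mulRight s) _ _ fun t => by
    rw [single_mul_single, one_mul, toPEquiv_mul_toPEquiv]; rfl

theorem pn_mul_single_toPEquiv (s : Equiv.Perm (Fin n)) :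
    pn n * single s.toPEquiv (1 : ℂ) = pn n := by
  rw [pn, Finset.sum_mul]
  exact Fintype.sum_equiv (Equiv.mulLeft s) _ _ fun t => by
    rw [single_mul_single, one_mul, toPEquiv_mul_toPEquiv]; rfl

theorem unop_mapDomainAntiHom_pn : (mapDomainAntiHom (symmAntiHom n) (pn n)).unop = pn n := by
  rw [pn, map_sum, Finset.unop_sum]
  exact Fintype.sum_equiv (Equiv.inv _) _ _ fun s => by
    simp [← Equiv.toPEquiv_symm, Equiv.Perm.inv_def]

theorem pn_mul_single_symm_mul_pn (a : PEquiv (Fin n) (Fin n)) (r : ℂ) :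
    pn n * single a.symm r * pn n = pn n * single a r * pn n := by
  obtain ⟨σ, hσ⟩ := a.exists_le_toPEquiv
  have hconj : single a.symm r =
      single σ.symm.toPEquiv 1 * single a r * single σ.symm.toPEquiv 1 := by
    rw [single_mul_single, single_mul_single, one_mul, mul_one,
      PEquiv.symm_eq_of_le_toPEquiv hσ, mul_def, mul_def, PEquiv.trans_assoc]
  rw [hconj, ← mul_assoc, ← mul_assoc, pn_mul_single_toPEquiv, mul_assoc,
    single_toPEquiv_mul_pn]

theorem pn_mul_unop_mapDomainAntiHom_mul_pn (x : MonoidAlgebra ℂ (PEquiv (Fin n) (Fin n))) :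
    pn n * (mapDomainAntiHom (symmAntiHom n) x).unop * pn n = pn n * x * pn n := by
  induction x using MonoidAlgebra.induction_linear with
  | zero => simp
  | add x y hx hy => simp only [map_add, unop_add, mul_add, add_mul, hx, hy]
  | single a r => simpa using pn_mul_single_symm_mul_pn a r

theorem unop_mapDomainAntiHom_corner (x : MonoidAlgebra ℂ (PEquiv (Fin n) (Fin n))) :
    (mapDomainAntiHom (symmAntiHom n) (pn n * x * pn n)).unop = pn n * x * pn n := by
  rw [map_mul, map_mul, unop_mul, unop_mul, unop_mapDomainAntiHom_pn, ← mul_assoc,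
    pn_mul_unop_mapDomainAntiHom_mul_pn]

end Rn

/-- In the semigroup algebra `ℂ[R_n]` of the finite symmetric inverse
semigroup `R_n`, with `p_n = Σ_{s ∈ S_n} s`, the algebra `p_n ℂ[R_n] p_n` is commutative. -/
theorem stmt7 (n : ℕ) (x y : MonoidAlgebra ℂ (PEquiv (Fin n) (Fin n))) :
    (pn n * x * pn n) * (pn n * y * pn n) = (pn n * y * pn n) * (pn n * x * pn n) :=
  (commute_corner_of_unop_map_eq (MonoidAlgebra.mapDomainAntiHom (Rn.symmAntiHom n))
    Rn.unop_mapDomainAntiHom_corner x y).eq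
end

section
/- Let π be a unitary representation of S_∞ that is tame (its restriction to the subgroups S_{n∞} has the property that the union of the fixed subspaces H_π(n) is dense). Then for each i ∈ ℕ the operators π((i n)) converge in the weak operator topology as n → ∞ to an operator P_i, and P_i is an idempotent: P_i² = P_i. -/
open scoped ComplexInnerProductSpace
open Filter Topology

/-- Finite (finitary) permutations of `ℕ`: the elements of `S_∞`. -/
def FinPerm (s : Equiv.Perm ℕ) : Prop := {x | s x ≠ x}.Finite

/-!
The matrix coefficients `⟪π (i n) η, ζ⟫` form a Cauchy sequence: `(i m)` is the conjugate of
`(i n)` by `(n m)`, and by tameness `π (n m)` moves `η` and `ζ` arbitrarily little once `n` and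
`m` are large. The limits form a bounded sesquilinear form, which the Riesz representation
theorem turns into an operator `P`. For idempotence, `(i n) (i m) = (i m) (n m)` gives
`π (i n) (π (i m) η) ≈ π (i m) η` for large `n ≠ m`; letting first `m` and then `n` tend to
infinity, and using that `π (i n)` is self-adjoint, yields `⟪P (P η), ζ⟫ = ⟪P η, ζ⟫`.
-/

open scoped InnerProductSpace
open Equiv

section WeakOperatorLimits

variable {𝕜 E : Type*} [RCLike 𝕜] [NormedAddCommGroup E] [InnerProductSpace 𝕜 E]

theorem norm_inner_sub_inner_le (a a' b b' : E) :
    ‖⟪a', b'⟫_𝕜 - ⟪a, b⟫_𝕜‖ ≤ ‖a' - a‖ * ‖b'‖ + ‖a‖ * ‖b' - b‖ := by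
  have h : ⟪a', b'⟫_𝕜 - ⟪a, b⟫_𝕜 = ⟪a' - a, b'⟫_𝕜 + ⟪a, b' - b⟫_𝕜 := by
    rw [inner_sub_left, inner_sub_right]; ring
  rw [h]
  exact (norm_add_le _ _).trans (add_le_add (norm_inner_le_norm _ _) (norm_inner_le_norm _ _))

theorem exists_tendsto_inner_of_forall_tendsto [CompleteSpace E] {ι : Type*} {l : Filter ι}
    [l.NeBot] {T : ι → E →L[𝕜] E} {C : ℝ} (hC : ∀ n, ‖T n‖ ≤ C)
    (h : ∀ x y, ∃ c, Tendsto (fun n => ⟪T n x, y⟫_𝕜) l (𝓝 c)) :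
    ∃ P : E →L[𝕜] E, ∀ x y, Tendsto (fun n => ⟪T n x, y⟫_𝕜) l (𝓝 ⟪P x, y⟫_𝕜) := by
  choose B hB using h
  have hbound : ∀ x y, ‖B x y‖ ≤ C * ‖x‖ * ‖y‖ := fun x y =>
    le_of_tendsto (hB x y).norm <| Eventually.of_forall fun n =>
      calc ‖⟪T n x, y⟫_𝕜‖ ≤ ‖T n x‖ * ‖y‖ := norm_inner_le_norm _ _
        _ ≤ C * ‖x‖ * ‖y‖ := by gcongr; exact (T n).le_of_opNorm_le (hC n) x
  let form : E →L⋆[𝕜] E →L[𝕜] 𝕜 := LinearMap.mkContinuous₂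
    (LinearMap.mk₂'ₛₗ (starRingEnd 𝕜) (RingHom.id 𝕜) B
      (fun x x' y => tendsto_nhds_unique (hB (x + x') y)
        (by simpa [inner_add_left] using (hB x y).add (hB x' y)))
      (fun c x y => tendsto_nhds_unique (hB (c • x) y)
        (by simpa [inner_smul_left] using (hB x y).const_mul (starRingEnd 𝕜 c)))
      (fun x y y' => tendsto_nhds_unique (hB x (y + y'))
        (by simpa [inner_add_right] using (hB x y).add (hB x y')))
      (fun c x y => tendsto_nhds_unique (hB x (c • y))
        (by simpa [inner_smul_right] using (hB x y).const_mul c)))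
    C hbound
  refine ⟨InnerProductSpace.continuousLinearMapOfBilin form, fun x y => ?_⟩
  rw [InnerProductSpace.continuousLinearMapOfBilin_apply]
  exact hB x y

theorem comp_self_eq_of_tendsto_inner {T : ℕ → E →L[𝕜] E} {P : E →L[𝕜] E}
    (hP : ∀ x y, Tendsto (fun n => ⟪T n x, y⟫_𝕜) atTop (𝓝 ⟪P x, y⟫_𝕜))
    (hT : ∀ n, (T n : E →ₗ[𝕜] E).IsSymmetric)
    (hfix : ∀ x y, ∀ ε > 0, ∀ᶠ n in atTop, ∀ᶠ m in atTop,
      dist ⟪T n (T m x), y⟫_𝕜 ⟪T m x, y⟫_𝕜 < ε) :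
    P ∘L P = P := by
  ext x
  refine ext_inner_right 𝕜 fun y => eq_of_forall_dist_le fun ε hε => ?_
  have hinner : ∀ n, Tendsto (fun m => dist ⟪T n (T m x), y⟫_𝕜 ⟪T m x, y⟫_𝕜) atTop
      (𝓝 (dist ⟪T n (P x), y⟫_𝕜 ⟪P x, y⟫_𝕜)) := fun n => by
    have hsym : ∀ z, ⟪T n z, y⟫_𝕜 = ⟪z, T n y⟫_𝕜 := (hT n · y)
    simp only [hsym]
    exact (hP x (T n y)).dist (hP x y)
  have hn : ∀ᶠ n in atTop, dist ⟪T n (P x), y⟫_𝕜 ⟪P x, y⟫_𝕜 ≤ ε :=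
    (hfix x y ε hε).mono fun n hn => le_of_tendsto (hinner n) (hn.mono fun _ => le_of_lt)
  exact le_of_tendsto ((hP (P x) y).dist tendsto_const_nhds) hn

end WeakOperatorLimits

theorem finPerm_swap (a b : ℕ) : FinPerm (swap a b) :=
  (Set.toFinite {a, b}).subset fun x hx => by
    by_contra h
    simp only [Set.mem_insert_iff, Set.mem_singleton_iff, not_or] at h
    exact hx (swap_apply_of_ne_of_ne h.1 h.2)

theorem FinPerm.mul {s t : Perm ℕ} (hs : FinPerm s) (ht : FinPerm t) : FinPerm (s * t) :=
  (hs.union ht).subset (Perm.set_support_mul_subset s t)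

theorem swap_mul_swap_eq_swap_mul_swap {i n m : ℕ} (hn : i ≠ n) (hm : i ≠ m) (hnm : n ≠ m) :
    swap i n * swap i m = swap i m * swap n m := by
  ext k
  simp only [Perm.mul_apply, swap_apply_def]
  split_ifs <;> omega

section Representation

variable {𝕜 E : Type*} [RCLike 𝕜] [NormedAddCommGroup E] [InnerProductSpace 𝕜 E]

theorem tendsto_map_swap_of_tame {π : Perm ℕ → E →L[𝕜] E} (hone : π 1 = 1) {x : E}
    (htame : ∀ ε > (0 : ℝ), ∃ N, ∀ k n, N < k → N < n → k ≠ n → ‖π (swap k n) x - x‖ < ε) :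
    Tendsto (fun p : ℕ × ℕ => π (swap p.1 p.2) x) atTop (𝓝 x) := by
  rw [Metric.tendsto_atTop]
  intro ε hε
  obtain ⟨N, hN⟩ := htame ε hε
  refine ⟨(N + 1, N + 1), fun ⟨k, n⟩ hp => ?_⟩
  obtain ⟨hk, hn⟩ := Prod.mk_le_mk.1 hp
  rw [dist_eq_norm]
  rcases eq_or_ne k n with rfl | hkn
  · rwa [swap_self, ← Perm.one_def, hone, one_apply_eq_self, sub_self, norm_zero]
  · exact hN k n (by omega) (by omega) hkn

/-- Only the values of `π` at finitary permutations are constrained. -/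
structure FinPerm.IsUnitaryRep (π : Perm ℕ → E →L[𝕜] E) : Prop where
  map_mul : ∀ s t, FinPerm s → FinPerm t → π (s * t) = π s ∘L π t
  map_one : π 1 = 1
  norm_map : ∀ s, FinPerm s → ∀ x, ‖π s x‖ = ‖x‖

namespace FinPerm.IsUnitaryRep

variable {π : Perm ℕ → E →L[𝕜] E}

theorem opNorm_le_one (hπ : IsUnitaryRep π) {s : Perm ℕ} (hs : FinPerm s) : ‖π s‖ ≤ 1 :=
  (π s).opNorm_le_bound zero_le_one fun x => by rw [hπ.norm_map s hs, one_mul]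

theorem map_swap_map_swap (hπ : IsUnitaryRep π) (a b : ℕ) (x : E) :
    π (swap a b) (π (swap a b) x) = x := by
  rw [← ContinuousLinearMap.comp_apply, ← hπ.map_mul _ _ (finPerm_swap a b) (finPerm_swap a b),
    swap_mul_self, hπ.map_one, one_apply_eq_self]

theorem isSymmetric_map_swap (hπ : IsUnitaryRep π) (a b : ℕ) :
    (π (swap a b) : E →ₗ[𝕜] E).IsSymmetric := fun x y =>
  calc ⟪π (swap a b) x, y⟫_𝕜 = ⟪π (swap a b) x, π (swap a b) (π (swap a b) y)⟫_𝕜 := by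
        rw [hπ.map_swap_map_swap]
    _ = ⟪x, π (swap a b) y⟫_𝕜 :=
        LinearIsometry.inner_map_map ⟨_, hπ.norm_map _ (finPerm_swap a b)⟩ _ _

theorem map_swap_eq_conj (hπ : IsUnitaryRep π) {i n m : ℕ} (hn : i ≠ n) (hm : i ≠ m) (x : E) :
    π (swap i m) x = π (swap n m) (π (swap i n) (π (swap n m) x)) := by
  rw [swap_comm i m, ← swap_mul_swap_mul_swap hn hm,
    hπ.map_mul _ _ ((finPerm_swap n m).mul (finPerm_swap i n)) (finPerm_swap n m),
    hπ.map_mul _ _ (finPerm_swap n m) (finPerm_swap i n)]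
  rfl

theorem map_swap_map_swap_of_ne (hπ : IsUnitaryRep π) {i n m : ℕ} (hn : i ≠ n) (hm : i ≠ m)
    (hnm : n ≠ m) (x : E) :
    π (swap i n) (π (swap i m) x) = π (swap i m) (π (swap n m) x) := by
  rw [← ContinuousLinearMap.comp_apply, ← hπ.map_mul _ _ (finPerm_swap i n) (finPerm_swap i m),
    swap_mul_swap_eq_swap_mul_swap hn hm hnm,
    hπ.map_mul _ _ (finPerm_swap i m) (finPerm_swap n m), ContinuousLinearMap.comp_apply]

theorem cauchySeq_inner_map_swap (hπ : IsUnitaryRep π)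
    (hlim : ∀ x : E, Tendsto (fun p : ℕ × ℕ => π (swap p.1 p.2) x) atTop (𝓝 x)) (i : ℕ) (x y : E) :
    CauchySeq fun n => ⟪π (swap i n) x, y⟫_𝕜 := by
  rw [cauchySeq_iff_tendsto_dist_atTop_0]
  have hbound : ∀ᶠ p : ℕ × ℕ in atTop, dist ⟪π (swap i p.1) x, y⟫_𝕜 ⟪π (swap i p.2) x, y⟫_𝕜
      ≤ ‖π (swap p.1 p.2) x - x‖ * ‖y‖ + ‖x‖ * ‖π (swap p.1 p.2) y - y‖ := by
    filter_upwards [eventually_ge_atTop (i + 1, i + 1)] with ⟨n, m⟩ hp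
    obtain ⟨hn, hm⟩ := Prod.mk_le_mk.1 hp
    have hconj : ⟪π (swap i m) x, y⟫_𝕜 = ⟪π (swap i n) (π (swap n m) x), π (swap n m) y⟫_𝕜 := by
      rw [hπ.map_swap_eq_conj (n := n) (by omega) (by omega)]
      exact hπ.isSymmetric_map_swap n m _ _
    rw [dist_comm, dist_eq_norm, hconj]
    refine (norm_inner_sub_inner_le _ _ _ _).trans_eq ?_
    rw [← map_sub, hπ.norm_map _ (finPerm_swap i n), hπ.norm_map _ (finPerm_swap i n),
      hπ.norm_map _ (finPerm_swap n m)]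
  refine squeeze_zero' (Eventually.of_forall fun _ => dist_nonneg) hbound ?_
  simpa using ((tendsto_iff_norm_sub_tendsto_zero.1 (hlim x)).mul_const ‖y‖).add
    ((tendsto_iff_norm_sub_tendsto_zero.1 (hlim y)).const_mul ‖x‖)

theorem eventually_dist_inner_map_swap_map_swap_lt (hπ : IsUnitaryRep π)
    (hlim : ∀ x : E, Tendsto (fun p : ℕ × ℕ => π (swap p.1 p.2) x) atTop (𝓝 x)) (i : ℕ) (x y : E) :
    ∀ ε > 0, ∀ᶠ n in atTop, ∀ᶠ m in atTop,
      dist ⟪π (swap i n) (π (swap i m) x), y⟫_𝕜 ⟪π (swap i m) x, y⟫_𝕜 < ε := by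
  intro ε hε
  have hsmall : Tendsto (fun p : ℕ × ℕ => ‖π (swap p.1 p.2) x - x‖ * ‖y‖) atTop (𝓝 0) := by
    simpa using (tendsto_iff_norm_sub_tendsto_zero.1 (hlim x)).mul_const ‖y‖
  rw [← prod_atTop_atTop_eq] at hsmall
  filter_upwards [eventually_gt_atTop i, (hsmall.eventually (gt_mem_nhds hε)).curry]
    with n hin hn
  filter_upwards [eventually_gt_atTop (max i n), hn] with m hm hnm
  rw [dist_eq_norm, hπ.map_swap_map_swap_of_ne (by omega) (by omega) (by omega), ← inner_sub_left,
    ← map_sub]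
  calc ‖⟪π (swap i m) (π (swap n m) x - x), y⟫_𝕜‖
      ≤ ‖π (swap i m) (π (swap n m) x - x)‖ * ‖y‖ := norm_inner_le_norm _ _
    _ = ‖π (swap n m) x - x‖ * ‖y‖ := by rw [hπ.norm_map _ (finPerm_swap i m)]
    _ < ε := hnm

end FinPerm.IsUnitaryRep

end Representation

/-- Let `π` be a tame unitary representation of `S_∞` on a Hilbert
space `H` (tameness: for every `η` and `ε > 0` there is `N` with
`‖π((k n))η − η‖ < ε` for all `k, n > N`).  Then for each `i` the operators
`π((i n))` converge in the weak operator topology as `n → ∞` to an operator `P_i`,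
and `P_i` is idempotent: `P_i² = P_i`. -/
theorem stmt8
    {H : Type*} [NormedAddCommGroup H] [InnerProductSpace ℂ H] [CompleteSpace H]
    (π : Equiv.Perm ℕ → H →L[ℂ] H)
    (hmul : ∀ s t : Equiv.Perm ℕ, FinPerm s → FinPerm t → π (s * t) = π s ∘L π t)
    (hone : π 1 = 1)
    (hunitary : ∀ s : Equiv.Perm ℕ, FinPerm s → ∀ η : H, ‖π s η‖ = ‖η‖)
    (htame : ∀ η : H, ∀ ε > (0 : ℝ), ∃ N, ∀ k n, N < k → N < n → k ≠ n →
      ‖π (Equiv.swap k n) η - η‖ < ε)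
    (i : ℕ) :
    ∃ P : H →L[ℂ] H,
      (∀ η ζ : H, Tendsto (fun n => ⟪π (Equiv.swap i n) η, ζ⟫) atTop (𝓝 ⟪P η, ζ⟫)) ∧
      P ∘L P = P := by
  have hπ : FinPerm.IsUnitaryRep π := ⟨hmul, hone, hunitary⟩
  have hlim η := tendsto_map_swap_of_tame hone (htame η)
  obtain ⟨P, hP⟩ := exists_tendsto_inner_of_forall_tendsto
    (fun n => hπ.opNorm_le_one (finPerm_swap i n))
    fun η ζ => cauchySeq_tendsto_of_complete (hπ.cauchySeq_inner_map_swap hlim i η ζ)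
  exact ⟨P, hP, comp_self_eq_of_tendsto_inner hP (fun n => hπ.isSymmetric_map_swap i n)
    (hπ.eventually_dist_inner_map_swap_map_swap_lt hlim i)⟩
end
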